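/- arXiv:2403.12540 — 4 statements merged into one kernel-verified Lean document; each statement's English description precedes it below -/
import Mathlib

section
/- Suppose rank(Σ_{l=1}^L B_l) = K and let Ω_sum = Σ_{l=1}^L Ω_l = Θ Z (Σ_{l=1}^L B_l) Z^T Θ. Let U ∈ R^{n×K} be a matrix with orthonormal columns whose columns are eigenvectors of Ω_sum corresponding to its K nonzero eigenvalues (compact eigendecomposition Ω_sum = U Σ U^T). Then every row of U is nonzero, and the row-normalized matrix U_* defined by U_*(i,:) = U(i,:)/‖U(i,:)‖_F satisfies U_* = Z X for some invertible K×K matrix X, and ‖X(k,:) − X(k̃,:)‖_F = √2 for all 1 ≤ k < k̃ ≤ K. -/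
open Matrix MeasureTheory ProbabilityTheory
open scoped BigOperators ENNReal

noncomputable section

/-- Euclidean norm of a finite real vector. -/
def vecNorm {m : ℕ} (v : Fin m → ℝ) : ℝ := Real.sqrt (∑ i, v i ^ 2)

/-- Frobenius norm of a real matrix. -/
def frobNorm {m p : ℕ} (M : Matrix (Fin m) (Fin p) ℝ) : ℝ :=
  Real.sqrt (∑ i, ∑ j, M i j ^ 2)

/-- Spectral norm (ℓ² operator norm) of a real matrix. -/
def specNorm {m p : ℕ} (M : Matrix (Fin m) (Fin p) ℝ) : ℝ :=
  sSup ((fun x => vecNorm (M.mulVec x)) '' {x : Fin p → ℝ | vecNorm x ≤ 1})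

open Classical in
/-- The k-th largest (1-indexed) eigenvalue in magnitude of a real symmetric matrix
(`0` if the matrix is not Hermitian). -/
def kthAbsEig {m : ℕ} (M : Matrix (Fin m) (Fin m) ℝ) (k : ℕ) : ℝ :=
  if hM : M.IsHermitian then
    (((Finset.univ : Finset (Fin m)).val.map fun i => |hM.eigenvalues i|).sort (· ≤ ·)).getD
      (m - k) 0
  else 0

/-- `Z` is a community membership matrix: 0/1 entries, exactly one 1 per row,
every column nonzero. -/
def IsMembership {n K : ℕ} (Z : Matrix (Fin n) (Fin K) ℝ) : Prop :=
  (∀ i k, Z i k = 0 ∨ Z i k = 1) ∧ (∀ i, ∑ k, Z i k = 1) ∧ (∀ k, ∃ i, Z i k = 1)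

/-- The MLDCSBM model hypotheses on the parameters `Z`, `θ`, `B`. -/
def MLDCSBM {n L K : ℕ} (Z : Matrix (Fin n) (Fin K) ℝ) (θ : Fin n → ℝ)
    (B : Fin L → Matrix (Fin K) (Fin K) ℝ) : Prop :=
  IsMembership Z ∧ (∀ i, 0 < θ i ∧ θ i ≤ 1) ∧
    (∀ l, (B l).IsSymm ∧ ∀ a b, 0 ≤ B l a b ∧ B l a b ≤ 1)

/-- Ω_l = Θ Z B_l Zᵀ Θ. -/
def OmegaL {n K : ℕ} (θ : Fin n → ℝ) (Z : Matrix (Fin n) (Fin K) ℝ)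
    (Bl : Matrix (Fin K) (Fin K) ℝ) : Matrix (Fin n) (Fin n) ℝ :=
  Matrix.diagonal θ * Z * Bl * Zᵀ * Matrix.diagonal θ

def thetaMin {n : ℕ} (θ : Fin n → ℝ) : ℝ := sInf (Set.range θ)
def thetaMax {n : ℕ} (θ : Fin n → ℝ) : ℝ := sSup (Set.range θ)

/-- Minimum community size. -/
def nMin {n K : ℕ} (Z : Matrix (Fin n) (Fin K) ℝ) : ℝ :=
  sInf (Set.range fun k : Fin K => ∑ i, Z i k)

/-- Maximum community size. -/
def nMax {n K : ℕ} (Z : Matrix (Fin n) (Fin K) ℝ) : ℝ :=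
  sSup (Set.range fun k : Fin K => ∑ i, Z i k)

/-- Column `k` of a matrix, as a vector. -/
def colVec {n K : ℕ} (U : Matrix (Fin n) (Fin K) ℝ) (k : Fin K) : Fin n → ℝ := fun i => U i k

/-- Row-normalized version of a matrix: each row divided by its Euclidean norm. -/
def rowNormalize {n K : ℕ} (U : Matrix (Fin n) (Fin K) ℝ) : Matrix (Fin n) (Fin K) ℝ :=
  fun i k => U i k / vecNorm (fun j => U i j)

/-- Diagonal degree matrix of a square matrix. -/
def degDiag {n : ℕ} (M : Matrix (Fin n) (Fin n) ℝ) : Matrix (Fin n) (Fin n) ℝ :=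
  Matrix.diagonal fun i => ∑ j, M i j

/-
Since `Ω_sum = Θ Z (B Zᵀ Θ)` with `B = ∑ B_l`, every eigenvector with nonzero eigenvalue lies in
the column space of `Θ Z`, so `U = Θ Z Y` for a `K × K` matrix `Y`. Then
`Uᵀ U = Yᵀ (Zᵀ Θ² Z) Y = Yᵀ D Y` with `D` diagonal, `D(k,k)` the squared norm of `θ` on
community `k`, so `Q = D^{1/2} Y` is orthogonal. Row `i` of `U` is the positive multiple
`θ(i) / √D(ℓ(i), ℓ(i))` of row `ℓ(i)` of `Q`; normalizing rows gives `U_* = Z Q`, and distinct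
rows of an orthogonal matrix are orthonormal, hence at distance `√2`.
-/

namespace Matrix

variable {ι κ m R : Type*}

theorem one_submatrix_transpose_mul_diagonal_mul [Fintype ι] [DecidableEq ι] [DecidableEq κ]
    [CommSemiring R] (ℓ : ι → κ) (w : ι → R) :
    ((1 : Matrix κ κ R).submatrix ℓ id)ᵀ * diagonal w * (1 : Matrix κ κ R).submatrix ℓ id =
      diagonal fun c => ∑ i with ℓ i = c, w i := by
  ext c c'
  rw [mul_apply]
  simp only [mul_diagonal, transpose_apply, submatrix_apply, id, one_apply,
    diagonal_apply, Finset.sum_filter]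
  split_ifs with h
  · subst h
    exact Finset.sum_congr rfl fun i _ => by grind
  · exact Finset.sum_eq_zero fun i _ => by grind

theorem one_submatrix_id_mul [Fintype κ] [DecidableEq κ] [NonAssocSemiring R] (ℓ : ι → κ)
    (X : Matrix κ m R) :
    (1 : Matrix κ κ R).submatrix ℓ id * X = X.submatrix ℓ id := by
  simpa using one_submatrix_mul ℓ (Equiv.refl κ) X

theorem eq_mul_mul_diagonal_inv [Fintype m] [Fintype κ] [DecidableEq κ] [Field R]
    {A : Matrix m m R} {U : Matrix m κ R} {μ : κ → R} (hμ : ∀ k, μ k ≠ 0)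
    (h : A * U = U * diagonal μ) : U = A * (U * diagonal μ⁻¹) := by
  rw [← Matrix.mul_assoc, h, Matrix.mul_assoc, diagonal_mul_diagonal]
  simp [mul_inv_cancel₀ (hμ _)]

theorem dotProduct_rows_of_mul_transpose_eq_one [Fintype κ] [DecidableEq ι] [CommSemiring R]
    {Q : Matrix ι κ R} (hQ : Q * Qᵀ = 1) (a b : ι) :
    Q a ⬝ᵥ Q b = (1 : Matrix ι ι R) a b := by
  rw [← hQ, mul_apply, dotProduct]
  rfl

end Matrix

theorem IsMembership.exists_surjective_eq_one_submatrix {n K : ℕ}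
    {Z : Matrix (Fin n) (Fin K) ℝ} (hZ : IsMembership Z) :
    ∃ ℓ : Fin n → Fin K, Function.Surjective ℓ ∧
      Z = (1 : Matrix (Fin K) (Fin K) ℝ).submatrix ℓ id := by
  obtain ⟨h01, hsum, hcol⟩ := hZ
  have hnonneg : ∀ i k, 0 ≤ Z i k := fun i k => by rcases h01 i k with h | h <;> simp [h]
  have hrow : ∀ i, ∃ k, Z i k = 1 := fun i => by
    by_contra! h
    have := hsum i
    rw [Finset.sum_eq_zero fun k _ => (h01 i k).resolve_right (h k)] at this
    exact zero_ne_one this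
  choose ℓ hℓ using hrow
  have hoff : ∀ i k, k ≠ ℓ i → Z i k = 0 := fun i k hk =>
    (h01 i k).resolve_right fun h1 => by
      have := Finset.add_le_sum (fun j _ => hnonneg i j) (Finset.mem_univ k)
        (Finset.mem_univ (ℓ i)) hk
      linarith [hsum i, hℓ i]
  refine ⟨ℓ, fun k => ?_, ?_⟩
  · obtain ⟨i, hi⟩ := hcol k
    exact ⟨i, by_contra fun h => by simp [hoff i k (Ne.symm h)] at hi⟩
  · ext i k
    by_cases hk : k = ℓ i
    · simp [hk, hℓ, one_apply]
    · simp [hoff i k hk, one_apply, Ne.symm hk]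

section RowNorms

variable {m n K : ℕ}

theorem vecNorm_eq_sqrt_dotProduct (v : Fin m → ℝ) : vecNorm v = √(v ⬝ᵥ v) := by
  simp only [vecNorm, dotProduct, sq]

theorem vecNorm_smul (a : ℝ) (v : Fin m → ℝ) : vecNorm (a • v) = |a| * vecNorm v := by
  rw [vecNorm_eq_sqrt_dotProduct, vecNorm_eq_sqrt_dotProduct, smul_dotProduct, dotProduct_smul,
    smul_eq_mul, smul_eq_mul, ← mul_assoc, Real.sqrt_mul (mul_self_nonneg a),
    Real.sqrt_mul_self_eq_abs]

theorem vecNorm_row_of_mul_transpose_eq_one {Q : Matrix (Fin K) (Fin m) ℝ} (hQ : Q * Qᵀ = 1)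
    (c : Fin K) : vecNorm (Q c) = 1 := by
  rw [vecNorm_eq_sqrt_dotProduct, dotProduct_rows_of_mul_transpose_eq_one hQ, one_apply_eq,
    Real.sqrt_one]

theorem vecNorm_sub_rows_of_mul_transpose_eq_one {Q : Matrix (Fin K) (Fin m) ℝ}
    (hQ : Q * Qᵀ = 1) {c c' : Fin K} (hcc' : c ≠ c') : vecNorm (Q c - Q c') = √2 := by
  rw [vecNorm_eq_sqrt_dotProduct, sub_dotProduct, dotProduct_sub, dotProduct_sub,
    dotProduct_comm (Q c') (Q c)]
  simp only [dotProduct_rows_of_mul_transpose_eq_one hQ, one_apply_eq, one_apply_ne hcc']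
  norm_num

theorem rowNormalize_diagonal_mul {a : Fin n → ℝ} (ha : ∀ i, 0 < a i)
    (V : Matrix (Fin n) (Fin K) ℝ) : rowNormalize (diagonal a * V) = rowNormalize V := by
  ext i k
  have hrow : (fun j => (diagonal a * V) i j) = a i • V i := by
    ext j
    simp [diagonal_mul]
  rw [rowNormalize, rowNormalize, hrow, vecNorm_smul, abs_of_pos (ha i), diagonal_mul]
  exact mul_div_mul_left _ _ (ha i).ne'

theorem rowNormalize_eq_self {V : Matrix (Fin n) (Fin K) ℝ} (hV : ∀ i, vecNorm (V i) = 1) :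
    rowNormalize V = V := by
  ext i k
  rw [rowNormalize, show (fun j => V i j) = V i from rfl, hV, div_one]

end RowNorms

section Factorization

variable {n K : ℕ}

theorem mul_eq_mul_diagonal_of_mulVec_colVec {A : Matrix (Fin n) (Fin n) ℝ}
    {U : Matrix (Fin n) (Fin K) ℝ} {μ : Fin K → ℝ}
    (h : ∀ k, A *ᵥ colVec U k = μ k • colVec U k) : A * U = U * diagonal μ := by
  ext i k
  rw [mul_diagonal, mul_comm]
  exact congrFun (h k) i

theorem sum_OmegaL {L : ℕ} (θ : Fin n → ℝ) (Z : Matrix (Fin n) (Fin K) ℝ)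
    (B : Fin L → Matrix (Fin K) (Fin K) ℝ) :
    ∑ l, OmegaL θ Z (B l) = OmegaL θ Z (∑ l, B l) := by
  simp only [OmegaL, Matrix.mul_sum, Matrix.sum_mul]

def communitySqNorm (ℓ : Fin n → Fin K) (θ : Fin n → ℝ) (c : Fin K) : ℝ :=
  ∑ i with ℓ i = c, θ i ^ 2

theorem communitySqNorm_pos {ℓ : Fin n → Fin K} (hℓ : Function.Surjective ℓ)
    {θ : Fin n → ℝ} (hθ : ∀ i, θ i ≠ 0) (c : Fin K) : 0 < communitySqNorm ℓ θ c := by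
  obtain ⟨i, rfl⟩ := hℓ c
  exact Finset.sum_pos' (fun j _ => sq_nonneg _) ⟨i, by simp, sq_pos_of_ne_zero (hθ i)⟩

theorem transpose_mul_self_diagonal_mul_one_submatrix_mul (ℓ : Fin n → Fin K)
    (θ : Fin n → ℝ) (Y : Matrix (Fin K) (Fin K) ℝ) :
    (diagonal θ * (1 : Matrix (Fin K) (Fin K) ℝ).submatrix ℓ id * Y)ᵀ *
        (diagonal θ * (1 : Matrix (Fin K) (Fin K) ℝ).submatrix ℓ id * Y) =
      Yᵀ * diagonal (communitySqNorm ℓ θ) * Y := by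
  set Z := (1 : Matrix (Fin K) (Fin K) ℝ).submatrix ℓ id
  calc (diagonal θ * Z * Y)ᵀ * (diagonal θ * Z * Y)
      = Yᵀ * (Zᵀ * (diagonal θ * diagonal θ) * Z) * Y := by
        simp only [transpose_mul, diagonal_transpose, Matrix.mul_assoc]
    _ = Yᵀ * diagonal (communitySqNorm ℓ θ) * Y := by
        rw [diagonal_mul_diagonal, one_submatrix_transpose_mul_diagonal_mul]
        simp only [← sq]
        rfl

theorem transpose_mul_self_diagonal_sqrt_mul {d : Fin K → ℝ} (hd : ∀ c, 0 ≤ d c)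
    (Y : Matrix (Fin K) (Fin K) ℝ) :
    (diagonal (fun c => √(d c)) * Y)ᵀ * (diagonal (fun c => √(d c)) * Y) =
      Yᵀ * diagonal d * Y := by
  rw [transpose_mul, diagonal_transpose, Matrix.mul_assoc, ← Matrix.mul_assoc (diagonal _),
    diagonal_mul_diagonal, ← Matrix.mul_assoc]
  simp only [Real.mul_self_sqrt (hd _)]

theorem exists_orthogonal_of_transpose_mul_self_eq_one {ℓ : Fin n → Fin K}
    (hℓ : Function.Surjective ℓ) {θ : Fin n → ℝ} (hθ : ∀ i, 0 < θ i)
    {Y : Matrix (Fin K) (Fin K) ℝ}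
    (hU : (diagonal θ * (1 : Matrix (Fin K) (Fin K) ℝ).submatrix ℓ id * Y)ᵀ *
      (diagonal θ * (1 : Matrix (Fin K) (Fin K) ℝ).submatrix ℓ id * Y) = 1) :
    ∃ (a : Fin n → ℝ) (Q : Matrix (Fin K) (Fin K) ℝ), (∀ i, 0 < a i) ∧ Q * Qᵀ = 1 ∧
      diagonal θ * (1 : Matrix (Fin K) (Fin K) ℝ).submatrix ℓ id * Y =
        diagonal a * Q.submatrix ℓ id := by
  set d := communitySqNorm ℓ θ
  have hd : ∀ c, 0 < √(d c) := fun c =>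
    Real.sqrt_pos.2 (communitySqNorm_pos hℓ (fun i => (hθ i).ne') c)
  refine ⟨fun i => θ i / √(d (ℓ i)), diagonal (fun c => √(d c)) * Y,
    fun i => div_pos (hθ i) (hd _), mul_eq_one_comm.mp ?_, ?_⟩
  · rw [transpose_mul_self_diagonal_sqrt_mul, ← hU,
      transpose_mul_self_diagonal_mul_one_submatrix_mul]
    exact fun c => Finset.sum_nonneg fun i _ => sq_nonneg (θ i)
  · ext i k
    simp only [Matrix.mul_assoc, one_submatrix_id_mul, diagonal_mul, submatrix_apply, id]
    field_simp [(hd (ℓ i)).ne']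

end Factorization

theorem stmt0_general {n L K : ℕ}
    (Z : Matrix (Fin n) (Fin K) ℝ) (θ : Fin n → ℝ)
    (B : Fin L → Matrix (Fin K) (Fin K) ℝ)
    (hmodel : MLDCSBM Z θ B)
    (U : Matrix (Fin n) (Fin K) ℝ)
    (hUorth : Uᵀ * U = 1)
    (hUeig : ∀ k, ∃ μ : ℝ, μ ≠ 0 ∧
      (∑ l, OmegaL θ Z (B l)).mulVec (colVec U k) = μ • colVec U k) :
    (∀ i, U i ≠ 0) ∧
    ∃ X : Matrix (Fin K) (Fin K) ℝ, X.det ≠ 0 ∧ rowNormalize U = Z * X ∧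
      ∀ k k' : Fin K, k ≠ k' → vecNorm (fun j => X k j - X k' j) = Real.sqrt 2 := by
  obtain ⟨hZ, hθ, -⟩ := hmodel
  obtain ⟨ℓ, hℓ, rfl⟩ := hZ.exists_surjective_eq_one_submatrix
  set Z := (1 : Matrix (Fin K) (Fin K) ℝ).submatrix ℓ id
  choose μ hμ hUμ using hUeig
  rw [sum_OmegaL] at hUμ
  have hUY : U = diagonal θ * Z * ((∑ l, B l) * Zᵀ * diagonal θ * (U * diagonal μ⁻¹)) := by
    conv_lhs => rw [eq_mul_mul_diagonal_inv hμ (mul_eq_mul_diagonal_of_mulVec_colVec hUμ)]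
    simp only [OmegaL, Matrix.mul_assoc]
  obtain ⟨a, Q, ha, hQ, hUQ⟩ :=
    exists_orthogonal_of_transpose_mul_self_eq_one hℓ (fun i => (hθ i).1) (hUY ▸ hUorth)
  rw [← hUY] at hUQ
  have hrows : ∀ i, vecNorm (Q.submatrix ℓ id i) = 1 := fun i =>
    vecNorm_row_of_mul_transpose_eq_one hQ (ℓ i)
  refine ⟨fun i hi => ?_, Q, det_ne_zero_of_right_inverse hQ, ?_,
    fun k k' hkk' => vecNorm_sub_rows_of_mul_transpose_eq_one hQ hkk'⟩
  · have hUi : U i = a i • Q.submatrix ℓ id i := by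
      rw [hUQ]; ext k; simp [diagonal_mul]
    have hQi : Q.submatrix ℓ id i ≠ 0 := ne_of_apply_ne vecNorm (by
      rw [hrows i]; simp [vecNorm])
    exact smul_ne_zero (ha i).ne' hQi (hUi ▸ hi)
  · rw [hUQ, rowNormalize_diagonal_mul ha, rowNormalize_eq_self hrows, one_submatrix_id_mul]

theorem stmt0 {n L K : ℕ} (hn : 0 < n) (hL : 0 < L) (hK : 0 < K) (hKn : K ≤ n)
    (Z : Matrix (Fin n) (Fin K) ℝ) (θ : Fin n → ℝ)
    (B : Fin L → Matrix (Fin K) (Fin K) ℝ)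
    (hmodel : MLDCSBM Z θ B)
    (hrank : (∑ l, B l).rank = K)
    (U : Matrix (Fin n) (Fin K) ℝ)
    (hUorth : Uᵀ * U = 1)
    (hUeig : ∀ k, ∃ μ : ℝ, μ ≠ 0 ∧
      (∑ l, OmegaL θ Z (B l)).mulVec (colVec U k) = μ • colVec U k) :
    (∀ i, U i ≠ 0) ∧
    ∃ X : Matrix (Fin K) (Fin K) ℝ, X.det ≠ 0 ∧ rowNormalize U = Z * X ∧
      ∀ k k' : Fin K, k ≠ k' → vecNorm (fun j => X k j - X k' j) = Real.sqrt 2 :=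
  stmt0_general Z θ B hmodel U hUorth hUeig
end
end

section
/- Suppose rank(Σ_{l=1}^L B_l²) = K and let S̃_sum = Σ_{l=1}^L Ω_l². Let V ∈ R^{n×K} be a matrix with orthonormal columns whose columns are eigenvectors of S̃_sum corresponding to its K nonzero eigenvalues (compact eigendecomposition S̃_sum = V Λ V^T). Then every row of V is nonzero, and the row-normalized matrix V_* defined by V_*(i,:) = V(i,:)/‖V(i,:)‖_F satisfies V_* = Z Y for some invertible K×K matrix Y, and ‖Y(k,:) − Y(k̃,:)‖_F = √2 for all 1 ≤ k < k̃ ≤ K. -/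
open Matrix MeasureTheory ProbabilityTheory
open scoped BigOperators ENNReal

noncomputable section

theorem stmt1 {n L K : ℕ} (hn : 0 < n) (hL : 0 < L) (hK : 0 < K) (hKn : K ≤ n)
    (Z : Matrix (Fin n) (Fin K) ℝ) (θ : Fin n → ℝ)
    (B : Fin L → Matrix (Fin K) (Fin K) ℝ)
    (hmodel : MLDCSBM Z θ B)
    (hrank : (∑ l, (B l) ^ 2).rank = K)
    (V : Matrix (Fin n) (Fin K) ℝ)
    (hVorth : Vᵀ * V = 1)
    (hVeig : ∀ k, ∃ μ : ℝ, μ ≠ 0 ∧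
      (∑ l, (OmegaL θ Z (B l)) ^ 2).mulVec (colVec V k) = μ • colVec V k) :
    (∀ i, V i ≠ 0) ∧
    ∃ Y : Matrix (Fin K) (Fin K) ℝ, Y.det ≠ 0 ∧ rowNormalize V = Z * Y ∧
      ∀ k k' : Fin K, k ≠ k' → vecNorm (fun j => Y k j - Y k' j) = Real.sqrt 2 := by
  classical
  obtain ⟨⟨h01, hsum, hcol⟩, hθ, hB⟩ := hmodel
  -- community labels
  have hex : ∀ i, ∃ k, Z i k = 1 := by
    intro i
    by_contra h
    push_neg at h
    have hz : ∀ k, Z i k = 0 := fun k => (h01 i k).resolve_right (h k)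
    have h1 := hsum i
    simp [hz] at h1
  choose ℓ hℓ using hex
  have hZnn : ∀ i k, 0 ≤ Z i k := by
    intro i k; rcases h01 i k with h | h <;> simp [h]
  have hzero : ∀ i k, k ≠ ℓ i → Z i k = 0 := by
    intro i k hk
    have hsplit : Z i (ℓ i) + ∑ k' ∈ Finset.univ.erase (ℓ i), Z i k' = 1 := by
      rw [Finset.add_sum_erase _ _ (Finset.mem_univ _)]
      exact hsum i
    rw [hℓ i] at hsplit
    have h0 : ∑ k' ∈ Finset.univ.erase (ℓ i), Z i k' = 0 := by linarith
    have h2 := (Finset.sum_eq_zero_iff_of_nonneg (fun k' _ => hZnn i k')).mp h0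
    exact h2 k (Finset.mem_erase.mpr ⟨hk, Finset.mem_univ k⟩)
  set M : Matrix (Fin n) (Fin K) ℝ := Matrix.diagonal θ * Z with hMdef
  have hMe : ∀ i k, M i k = θ i * Z i k := by
    intro i k; rw [hMdef, Matrix.diagonal_mul]
  set d : Fin K → ℝ := fun k => ∑ i, θ i ^ 2 * Z i k with hddef
  have hdpos : ∀ k, 0 < d k := by
    intro k
    obtain ⟨i, hi⟩ := hcol k
    have hip : 0 < θ i ^ 2 * Z i k := by
      rw [hi, mul_one]; exact pow_pos (hθ i).1 2
    exact Finset.sum_pos' (fun j _ => mul_nonneg (sq_nonneg _) (hZnn j k))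
      ⟨i, Finset.mem_univ i, hip⟩
  have hZmul : ∀ i k k', k ≠ k' → Z i k * Z i k' = 0 := by
    intro i k k' hkk
    by_cases h : k = ℓ i
    · subst h
      rw [hzero i k' (fun hc => hkk hc.symm), mul_zero]
    · rw [hzero i k h, zero_mul]
  have hD : Mᵀ * M = Matrix.diagonal d := by
    ext k k'
    by_cases h : k = k'
    · subst h
      rw [Matrix.mul_apply, Matrix.diagonal_apply_eq]
      refine Finset.sum_congr rfl fun i _ => ?_
      rw [Matrix.transpose_apply, hMe]
      rcases h01 i k with hz | hz <;> rw [hz] <;> ring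
    · rw [Matrix.mul_apply, Matrix.diagonal_apply_ne _ h]
      refine Finset.sum_eq_zero fun i _ => ?_
      rw [Matrix.transpose_apply, hMe, hMe,
        show θ i * Z i k * (θ i * Z i k') = θ i * θ i * (Z i k * Z i k') from by ring,
        hZmul i k k' h, mul_zero]
  have hΩ : ∀ l, OmegaL θ Z (B l) = M * B l * Mᵀ := by
    intro l
    rw [OmegaL, hMdef]
    rw [Matrix.transpose_mul, Matrix.diagonal_transpose]
    simp only [Matrix.mul_assoc]
  have hS : (∑ l, (OmegaL θ Z (B l)) ^ 2)
      = M * ((∑ l, B l * (Mᵀ * M) * B l) * Mᵀ) := by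
    simp only [Matrix.sum_mul, Matrix.mul_sum]
    refine Finset.sum_congr rfl fun l _ => ?_
    rw [hΩ l, sq]
    simp only [Matrix.mul_assoc]
  choose μ hμ hveq using hVeig
  set W : Matrix (Fin K) (Fin K) ℝ :=
    fun j k => (μ k)⁻¹ * (((∑ l, B l * (Mᵀ * M) * B l) * Mᵀ) *ᵥ (colVec V k)) j with hWdef
  have hVW : V = M * W := by
    ext i k
    have h1 : (M * ((∑ l, B l * (Mᵀ * M) * B l) * Mᵀ)) *ᵥ (colVec V k)
        = μ k • colVec V k := by rw [← hS]; exact hveq k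
    have h2 : (M * W) i k
        = (μ k)⁻¹ * ∑ j, M i j * (((∑ l, B l * (Mᵀ * M) * B l) * Mᵀ) *ᵥ (colVec V k)) j := by
      rw [Matrix.mul_apply, Finset.mul_sum]
      exact Finset.sum_congr rfl fun j _ => by rw [hWdef]; ring
    have h3 : ∑ j, M i j * (((∑ l, B l * (Mᵀ * M) * B l) * Mᵀ) *ᵥ (colVec V k)) j
        = μ k * V i k := by
      have h4 : (M *ᵥ (((∑ l, B l * (Mᵀ * M) * B l) * Mᵀ) *ᵥ (colVec V k))) i
          = (μ k • colVec V k) i := by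
        rw [Matrix.mulVec_mulVec, h1]
      simpa [Matrix.mulVec, dotProduct, colVec] using h4
    rw [h2, h3, inv_mul_cancel_left₀ (hμ k)]
  have hWDW : Wᵀ * (Matrix.diagonal d * W) = 1 := by
    have hv := hVorth
    rw [hVW, Matrix.transpose_mul] at hv
    rw [← hD]
    calc Wᵀ * (Mᵀ * M * W) = Wᵀ * Mᵀ * (M * W) := by simp only [Matrix.mul_assoc]
    _ = 1 := hv
  have hG : Matrix.diagonal d * (W * Wᵀ) = 1 := by
    rw [← Matrix.mul_assoc]
    exact mul_eq_one_comm.mp hWDW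
  have hGe : ∀ k k', d k * (∑ j, W k j * W k' j) = if k = k' then (1:ℝ) else 0 := by
    intro k k'
    have h1 : (Matrix.diagonal d * (W * Wᵀ)) k k' = (1 : Matrix (Fin K) (Fin K) ℝ) k k' := by
      rw [hG]
    rw [Matrix.diagonal_mul, Matrix.mul_apply] at h1
    simp only [Matrix.transpose_apply, Matrix.one_apply] at h1
    exact h1
  have hWsq : ∀ k, ∑ j, W k j ^ 2 = (d k)⁻¹ := by
    intro k
    have h1 := hGe k k
    rw [if_pos rfl] at h1
    have h2 : ∑ j, W k j ^ 2 = ∑ j, W k j * W k j :=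
      Finset.sum_congr rfl fun j _ => sq (W k j)
    rw [h2, ← (inv_eq_of_mul_eq_one_right h1)]
  have hWorth : ∀ k k', k ≠ k' → ∑ j, W k j * W k' j = 0 := by
    intro k k' hkk
    have h1 := hGe k k'
    rw [if_neg hkk] at h1
    rcases mul_eq_zero.mp h1 with h | h
    · exact absurd h (ne_of_gt (hdpos k))
    · exact h
  set s : Fin K → ℝ := fun k => Real.sqrt ((d k)⁻¹) with hsdef
  have hspos : ∀ k, 0 < s k := fun k => Real.sqrt_pos.mpr (inv_pos.mpr (hdpos k))
  have hssq : ∀ k, s k ^ 2 = (d k)⁻¹ := fun k =>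
    Real.sq_sqrt (inv_pos.mpr (hdpos k)).le
  set Y : Matrix (Fin K) (Fin K) ℝ := fun k j => W k j / s k with hYdef
  have hYsq : ∀ k, ∑ j, Y k j ^ 2 = 1 := by
    intro k
    have h1 : ∑ j, Y k j ^ 2 = (∑ j, W k j ^ 2) / s k ^ 2 := by
      rw [Finset.sum_div]
      exact Finset.sum_congr rfl fun j _ => by rw [hYdef]; ring
    rw [h1, hWsq, hssq]
    exact div_self (ne_of_gt (inv_pos.mpr (hdpos k)))
  have hYorth : ∀ k k', k ≠ k' → ∑ j, Y k j * Y k' j = 0 := by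
    intro k k' hkk
    have h1 : ∑ j, Y k j * Y k' j = (∑ j, W k j * W k' j) / (s k * s k') := by
      rw [Finset.sum_div]
      exact Finset.sum_congr rfl fun j _ => by rw [hYdef]; ring
    rw [h1, hWorth k k' hkk, zero_div]
  -- row structure of V
  have hVrow : ∀ i k, V i k = θ i * W (ℓ i) k := by
    intro i k
    rw [hVW, Matrix.mul_apply]
    rw [Finset.sum_eq_single (ℓ i)]
    · rw [hMe, hℓ i, mul_one]
    · intro j _ hj
      rw [hMe, hzero i j hj, mul_zero, zero_mul]
    · intro h; exact absurd (Finset.mem_univ _) h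
  have hWrow_ne : ∀ k, ∃ j, W k j ≠ 0 := by
    intro k
    by_contra h
    push_neg at h
    have h1 : ∑ j, W k j ^ 2 = 0 := Finset.sum_eq_zero fun j _ => by rw [h j]; ring
    rw [hWsq] at h1
    exact absurd h1 (ne_of_gt (inv_pos.mpr (hdpos k)))
  constructor
  · intro i hVi
    obtain ⟨j, hj⟩ := hWrow_ne (ℓ i)
    have h1 : V i j = 0 := by rw [hVi]; rfl
    rw [hVrow i j] at h1
    exact hj ((mul_eq_zero.mp h1).resolve_left (ne_of_gt (hθ i).1))
  refine ⟨Y, ?_, ?_, ?_⟩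
  · -- det Y ≠ 0
    have hYYt : Y * Yᵀ = 1 := by
      ext k k'
      rw [Matrix.mul_apply]
      simp only [Matrix.transpose_apply, Matrix.one_apply]
      by_cases h : k = k'
      · subst h
        rw [if_pos rfl, ← hYsq k]
        exact Finset.sum_congr rfl fun j _ => (sq (Y k j)).symm
      · rw [if_neg h]
        exact hYorth k k' h
    have hdet : Y.det * Yᵀ.det = 1 := by rw [← Matrix.det_mul, hYYt, Matrix.det_one]
    exact left_ne_zero_of_mul_eq_one hdet
  · -- rowNormalize V = Z * Y
    have hVn : ∀ i, vecNorm (fun j => V i j) = θ i * s (ℓ i) := by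
      intro i
      have h1 : ∑ j, V i j ^ 2 = θ i ^ 2 * ∑ j, W (ℓ i) j ^ 2 := by
        rw [Finset.mul_sum]
        exact Finset.sum_congr rfl fun j _ => by rw [hVrow]; ring
      rw [vecNorm, h1, hWsq, Real.sqrt_mul (sq_nonneg _), Real.sqrt_sq (hθ i).1.le, hsdef]
    ext i k
    rw [rowNormalize, Matrix.mul_apply]
    rw [Finset.sum_eq_single (ℓ i)]
    · rw [hℓ i, one_mul, hVn i, hVrow i k, hYdef,
        mul_div_mul_left _ _ (ne_of_gt (hθ i).1)]
    · intro j _ hj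
      rw [hzero i j hj, zero_mul]
    · intro h; exact absurd (Finset.mem_univ _) h
  · -- distances
    intro k k' hkk
    have h1 : ∑ j, (Y k j - Y k' j) ^ 2
        = ∑ j, Y k j ^ 2 + ∑ j, Y k' j ^ 2 - 2 * ∑ j, Y k j * Y k' j := by
      rw [← Finset.sum_add_distrib, Finset.mul_sum, ← Finset.sum_sub_distrib]
      exact Finset.sum_congr rfl fun j _ => by ring
    rw [vecNorm, h1, hYsq, hYsq, hYorth k k' hkk]
    norm_num

end
end

section
/- Suppose rank(Σ_{l=1}^L B_l²) = K and λ_K(Σ_{l=1}^L B_l²) ≥ c₂ L for some constant c₂ > 0. Let V, Ŝ, V̂ and the orthogonal matrix Q_s be as follows: V ∈ R^{n×K} has orthonormal columns that are eigenvectors of S̃_sum corresponding to its K nonzero eigenvalues, Ŝ ∈ R^{n×n} is symmetric, V̂ ∈ R^{n×K} has orthonormal columns that are eigenvectors of Ŝ for its K largest-magnitude eigenvalues, every row of V̂ is nonzero, and Q_s is a K×K orthogonal matrix achieving ‖V̂Q_s − V‖_F ≤ 2√(2K)‖Ŝ − S̃_sum‖/(c₂θ_min⁴n_min²L). Let V_*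 and V̂_* be obtained from V and V̂ by normalizing each row to unit Euclidean norm. Then ‖V̂_*Q_s − V_*‖_F ≤ 4√(2K)·θ_max√(n_max)·‖Ŝ − S̃_sum‖ / (c₂ θ_min⁵ n_min² L). -/
/-!
Each column of `V` is an eigenvector of `S̃_sum = Θ Z M` with a nonzero eigenvalue, so
`V = Θ Z X` for a `K × K` matrix `X`: row `i` of `V` is `θ(i)` times row `ℓ(i)` of `X`.
Orthonormality `VᵀV = I` reads `Xᵀ D X = I` with `D = diag (∑_{ℓ(j) = g} θ(j)²)`, hence
`X Xᵀ = D⁻¹` and `‖V_i‖ = θ(i) / (∑_{ℓ(j) = ℓ(i)} θ(j)²)^{1/2} ≥ θ_min / (θ_max √n_max)`.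
Near `v ≠ 0` the map `u ↦ u / ‖u‖` is `2 / ‖v‖`-Lipschitz, and row normalization commutes with
right multiplication by the orthogonal `Q_s`, so
`‖V̂_* Q_s - V_*‖_F ≤ (2 θ_max √n_max / θ_min) ‖V̂ Q_s - V‖_F`.
-/

open Matrix MeasureTheory ProbabilityTheory
open scoped BigOperators ENNReal

noncomputable section

open Finset

lemma norm_inv_smul_sub_inv_smul_le {E : Type*} [NormedAddCommGroup E] [NormedSpace ℝ E]
    (u : E) {v : E} (hv : v ≠ 0) :
    ‖‖u‖⁻¹ • u - ‖v‖⁻¹ • v‖ ≤ 2 * ‖u - v‖ / ‖v‖ := by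
  have hv' : 0 < ‖v‖ := norm_pos_iff.2 hv
  have hscale : ‖(‖u‖⁻¹ - ‖v‖⁻¹) • u‖ ≤ ‖u - v‖ / ‖v‖ := by
    rcases eq_or_ne u 0 with rfl | hu
    · simp only [smul_zero, norm_zero]; positivity
    have hu' : 0 < ‖u‖ := norm_pos_iff.2 hu
    calc ‖(‖u‖⁻¹ - ‖v‖⁻¹) • u‖ = |‖v‖ - ‖u‖| / ‖v‖ := by
          rw [norm_smul, Real.norm_eq_abs, inv_sub_inv hu'.ne' hv'.ne', abs_div,
            abs_of_pos (mul_pos hu' hv')]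
          field_simp
      _ ≤ ‖u - v‖ / ‖v‖ := by
          gcongr
          rw [abs_sub_comm]
          exact abs_norm_sub_norm_le u v
  calc ‖‖u‖⁻¹ • u - ‖v‖⁻¹ • v‖ = ‖‖v‖⁻¹ • (u - v) + (‖u‖⁻¹ - ‖v‖⁻¹) • u‖ := by
        rw [sub_smul, smul_sub]; abel_nf
    _ ≤ ‖v‖⁻¹ * ‖u - v‖ + ‖u - v‖ / ‖v‖ := by
        grw [norm_add_le, norm_smul, Real.norm_of_nonneg (inv_nonneg.2 hv'.le), hscale]
    _ = 2 * ‖u - v‖ / ‖v‖ := by ring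

lemma vecNorm_eq_norm_toLp {m : ℕ} (v : Fin m → ℝ) : vecNorm v = ‖WithLp.toLp 2 v‖ := by
  simp [vecNorm, EuclideanSpace.norm_eq, sq_abs]

lemma vecNorm_nonneg {m : ℕ} (v : Fin m → ℝ) : 0 ≤ vecNorm v := Real.sqrt_nonneg _

lemma vecNorm_inv_smul_sub_inv_smul_le {m : ℕ} (u : Fin m → ℝ) {v : Fin m → ℝ} (hv : v ≠ 0) :
    vecNorm ((vecNorm u)⁻¹ • u - (vecNorm v)⁻¹ • v) ≤ 2 * vecNorm (u - v) / vecNorm v := by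
  simp only [vecNorm_eq_norm_toLp, WithLp.toLp_sub, WithLp.toLp_smul]
  exact norm_inv_smul_sub_inv_smul_le _ (by simpa using hv)

lemma vecNorm_vecMul_of_mul_transpose_eq_one {m : ℕ} {Q : Matrix (Fin m) (Fin m) ℝ}
    (hQ : Q * Qᵀ = 1) (v : Fin m → ℝ) : vecNorm (v ᵥ* Q) = vecNorm v := by
  have hdot : ∀ w : Fin m → ℝ, vecNorm w = √(w ⬝ᵥ w) := fun w => by
    simp [vecNorm, dotProduct, sq]
  rw [hdot, hdot]
  congr 1
  calc v ᵥ* Q ⬝ᵥ v ᵥ* Q = v ᵥ* Q ⬝ᵥ Qᵀ *ᵥ v := by rw [mulVec_transpose]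
    _ = v ᵥ* Q ᵥ* Qᵀ ⬝ᵥ v := dotProduct_mulVec _ _ _
    _ = v ⬝ᵥ v := by rw [vecMul_vecMul, hQ, vecMul_one]

lemma rowNormalize_apply {m K : ℕ} (U : Matrix (Fin m) (Fin K) ℝ) (i : Fin m) :
    rowNormalize U i = (vecNorm (U i))⁻¹ • U i := by
  ext k
  simp [rowNormalize, div_eq_inv_mul]

lemma rowNormalize_mul_of_mul_transpose_eq_one {m K : ℕ} {Q : Matrix (Fin K) (Fin K) ℝ}
    (hQ : Q * Qᵀ = 1) (U : Matrix (Fin m) (Fin K) ℝ) :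
    rowNormalize U * Q = rowNormalize (U * Q) := by
  funext i
  rw [mul_apply_eq_vecMul, rowNormalize_apply, rowNormalize_apply, smul_vecMul,
    mul_apply_eq_vecMul, vecNorm_vecMul_of_mul_transpose_eq_one hQ]

lemma frobNorm_eq_sqrt_sum_sq_vecNorm {m p : ℕ} (A : Matrix (Fin m) (Fin p) ℝ) :
    frobNorm A = √(∑ i, vecNorm (A i) ^ 2) := by
  simp only [frobNorm, vecNorm, Real.sq_sqrt (Finset.sum_nonneg fun _ _ => sq_nonneg _)]

lemma frobNorm_le_mul_of_vecNorm_le {m p : ℕ} {A B : Matrix (Fin m) (Fin p) ℝ} {c : ℝ}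
    (hc : 0 ≤ c) (h : ∀ i, vecNorm (A i) ≤ c * vecNorm (B i)) :
    frobNorm A ≤ c * frobNorm B := by
  rw [frobNorm_eq_sqrt_sum_sq_vecNorm, frobNorm_eq_sqrt_sum_sq_vecNorm, ← Real.sqrt_sq hc,
    ← Real.sqrt_mul (sq_nonneg c), Finset.mul_sum]
  gcongr with i
  rw [← mul_pow]
  exact pow_le_pow_left₀ (Real.sqrt_nonneg _) (h i) 2

lemma frobNorm_rowNormalize_sub_le {m p : ℕ} {U V : Matrix (Fin m) (Fin p) ℝ} {c : ℝ}
    (hc : 0 < c) (hV : ∀ i, c ≤ vecNorm (V i)) :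
    frobNorm (rowNormalize U - rowNormalize V) ≤ 2 / c * frobNorm (U - V) := by
  refine frobNorm_le_mul_of_vecNorm_le (by positivity) fun i => ?_
  have hVi : 0 < vecNorm (V i) := hc.trans_le (hV i)
  have hVi_ne : V i ≠ 0 := by
    rintro h
    simp [h, vecNorm] at hVi
  calc vecNorm (rowNormalize U i - rowNormalize V i)
      ≤ 2 * vecNorm (U i - V i) / vecNorm (V i) := by
        simpa only [rowNormalize_apply] using vecNorm_inv_smul_sub_inv_smul_le (U i) hVi_ne
    _ ≤ 2 * vecNorm (U i - V i) / c := by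
        gcongr
        · exact mul_nonneg zero_le_two (vecNorm_nonneg _)
        · exact hV i
    _ = 2 / c * vecNorm (U i - V i) := by ring

lemma IsMembership.exists_label {n K : ℕ} {Z : Matrix (Fin n) (Fin K) ℝ} (hZ : IsMembership Z) :
    ∃ ℓ : Fin n → Fin K, ∀ i k, Z i k = if ℓ i = k then 1 else 0 := by
  obtain ⟨h01, hrow, -⟩ := hZ
  have hnonneg : ∀ i k, 0 ≤ Z i k := fun i k => by rcases h01 i k with h | h <;> simp [h]
  have hone : ∀ i, ∃ k, Z i k = 1 := fun i => by
    obtain ⟨k, -, hk⟩ := Finset.exists_ne_zero_of_sum_ne_zero (s := Finset.univ) (f := Z i)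
      (by rw [hrow i]; exact one_ne_zero)
    exact ⟨k, (h01 i k).resolve_left hk⟩
  choose ℓ hℓ using hone
  refine ⟨ℓ, fun i k => ?_⟩
  split_ifs with hk
  · exact hk ▸ hℓ i
  · have hrest : ∑ k' ∈ Finset.univ.erase (ℓ i), Z i k' = 0 := by
      linarith [Finset.add_sum_erase Finset.univ (Z i) (Finset.mem_univ (ℓ i)), hrow i, hℓ i]
    exact (Finset.sum_eq_zero_iff_of_nonneg fun k' _ => hnonneg i k').1 hrest k
      (Finset.mem_erase.2 ⟨Ne.symm hk, Finset.mem_univ k⟩)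

section Label

variable {ι κ : Type*} [Fintype ι] [DecidableEq κ] {Z : Matrix ι κ ℝ} {ℓ : ι → κ}

lemma diagonal_mul_mul_apply_of_label [DecidableEq ι] [Fintype κ] {m : Type*}
    (hZ : ∀ i k, Z i k = if ℓ i = k then 1 else 0) (θ : ι → ℝ) (X : Matrix κ m ℝ) (i : ι) :
    (diagonal θ * Z * X) i = θ i • X (ℓ i) := by
  ext k
  rw [Matrix.mul_apply]
  simp [Matrix.diagonal_mul, hZ]

lemma transpose_mul_diagonal_mul_of_label [DecidableEq ι]
    (hZ : ∀ i k, Z i k = if ℓ i = k then 1 else 0) (w : ι → ℝ) :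
    Zᵀ * diagonal w * Z = diagonal fun g => ∑ i with ℓ i = g, w i := by
  ext g h
  simp only [Matrix.mul_apply, transpose_apply, hZ, diagonal_apply]
  split_ifs with hgh
  · subst hgh
    simp +contextual [Finset.sum_filter]
  · refine Finset.sum_eq_zero fun i _ => ?_
    by_cases hi : ℓ i = g <;> simp [hi, hgh]

lemma sum_col_of_label (hZ : ∀ i k, Z i k = if ℓ i = k then 1 else 0) (g : κ) :
    ∑ i, Z i g = (#{i | ℓ i = g} : ℝ) := by
  simp [hZ, Finset.sum_boole]

end Label

lemma mul_sum_sq_row_eq_one_of_transpose_mul_diagonal_mul_eq_one {R κ : Type*} [CommRing R]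
    [Fintype κ] [DecidableEq κ] {X : Matrix κ κ R} {d : κ → R} (h : Xᵀ * diagonal d * X = 1)
    (g : κ) : d g * ∑ k, X g k ^ 2 = 1 := by
  have h' : X * (Xᵀ * diagonal d) = 1 := mul_eq_one_comm.mp h
  replace h' := congrFun (congrFun h' g) g
  rw [Matrix.mul_apply, one_apply_eq] at h'
  simp only [mul_diagonal, transpose_apply] at h'
  rw [← h', Finset.mul_sum]
  exact Finset.sum_congr rfl fun k _ => by ring

lemma eq_mul_of_mulVec_colVec_eq_smul {n p K : ℕ} {A : Matrix (Fin n) (Fin p) ℝ}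
    {M : Matrix (Fin p) (Fin n) ℝ} {V : Matrix (Fin n) (Fin K) ℝ}
    (h : ∀ k, ∃ μ : ℝ, μ ≠ 0 ∧ (A * M) *ᵥ colVec V k = μ • colVec V k) :
    ∃ X : Matrix (Fin p) (Fin K) ℝ, V = A * X := by
  choose μ hμ hV using h
  have hAMV : A * M * V = V * diagonal μ := by
    ext i k
    rw [mul_diagonal, mul_comm]
    exact congrFun (hV k) i
  have hμμ : diagonal μ * diagonal μ⁻¹ = 1 := by
    rw [diagonal_mul_diagonal, ← diagonal_one]
    exact congrArg diagonal (funext fun k => mul_inv_cancel₀ (hμ k))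
  refine ⟨M * V * diagonal μ⁻¹, ?_⟩
  calc V = V * diagonal μ * diagonal μ⁻¹ := by rw [Matrix.mul_assoc, hμμ, Matrix.mul_one]
    _ = A * (M * V * diagonal μ⁻¹) := by rw [← hAMV]; simp only [Matrix.mul_assoc]

lemma sum_OmegaL_sq_eq_mul {n L K : ℕ} (θ : Fin n → ℝ) (Z : Matrix (Fin n) (Fin K) ℝ)
    (B : Fin L → Matrix (Fin K) (Fin K) ℝ) :
    ∑ l, OmegaL θ Z (B l) ^ 2 =
      diagonal θ * Z * ∑ l, B l * (Zᵀ * diagonal θ * diagonal θ * Z) * B l * Zᵀ * diagonal θ := by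
  rw [Matrix.mul_sum]
  refine Finset.sum_congr rfl fun l _ => ?_
  simp only [OmegaL, pow_two, Matrix.mul_assoc]

lemma sum_label_sq_mul_sq_vecNorm_row_eq {n K : ℕ} {Z : Matrix (Fin n) (Fin K) ℝ} {ℓ : Fin n → Fin K}
    (hZ : ∀ i k, Z i k = if ℓ i = k then 1 else 0) {θ : Fin n → ℝ} {X : Matrix (Fin K) (Fin K) ℝ}
    (hV : (diagonal θ * Z * X)ᵀ * (diagonal θ * Z * X) = 1) (i : Fin n) :
    (∑ j with ℓ j = ℓ i, θ j ^ 2) * vecNorm ((diagonal θ * Z * X) i) ^ 2 = θ i ^ 2 := by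
  have hX : Xᵀ * diagonal (fun g => ∑ j with ℓ j = g, θ j ^ 2) * X = 1 := by
    rw [← transpose_mul_diagonal_mul_of_label hZ, ← hV]
    simp only [transpose_mul, diagonal_transpose, sq, ← diagonal_mul_diagonal, Matrix.mul_assoc]
  have hrow := mul_sum_sq_row_eq_one_of_transpose_mul_diagonal_mul_eq_one hX (ℓ i)
  rw [diagonal_mul_mul_apply_of_label hZ, vecNorm,
    Real.sq_sqrt (Finset.sum_nonneg fun _ _ => sq_nonneg _)]
  simp only [Pi.smul_apply, smul_eq_mul, mul_pow, ← Finset.mul_sum]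
  linear_combination θ i ^ 2 * hrow

lemma thetaMin_le {n : ℕ} (θ : Fin n → ℝ) (i : Fin n) : thetaMin θ ≤ θ i :=
  csInf_le (Set.finite_range θ).bddBelow ⟨i, rfl⟩

lemma le_thetaMax {n : ℕ} (θ : Fin n → ℝ) (i : Fin n) : θ i ≤ thetaMax θ :=
  le_csSup (Set.finite_range θ).bddAbove ⟨i, rfl⟩

lemma thetaMin_pos {n : ℕ} [Nonempty (Fin n)] {θ : Fin n → ℝ} (hθ : ∀ i, 0 < θ i) :
    0 < thetaMin θ := by
  obtain ⟨i, hi⟩ := (Set.range_nonempty θ).csInf_mem (Set.finite_range θ)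
  unfold thetaMin
  exact hi ▸ hθ i

lemma sum_label_sq_le {n K : ℕ} {Z : Matrix (Fin n) (Fin K) ℝ} {ℓ : Fin n → Fin K}
    (hZ : ∀ i k, Z i k = if ℓ i = k then 1 else 0) {θ : Fin n → ℝ} (hθ : ∀ i, 0 ≤ θ i)
    (g : Fin K) : ∑ i with ℓ i = g, θ i ^ 2 ≤ thetaMax θ ^ 2 * nMax Z := by
  have hcard : (#{i | ℓ i = g} : ℝ) ≤ nMax Z := by
    rw [← sum_col_of_label hZ]
    exact le_csSup (Set.finite_range _).bddAbove ⟨g, rfl⟩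
  calc ∑ i with ℓ i = g, θ i ^ 2 ≤ #{i | ℓ i = g} • thetaMax θ ^ 2 :=
        Finset.sum_le_card_nsmul _ _ _ fun i _ => pow_le_pow_left₀ (hθ i) (le_thetaMax θ i) 2
    _ ≤ thetaMax θ ^ 2 * nMax Z := by
        rw [nsmul_eq_mul, mul_comm]
        gcongr

lemma MLDCSBM.pos_le_vecNorm_row {n L K : ℕ} [Nonempty (Fin n)] {Z : Matrix (Fin n) (Fin K) ℝ}
    {θ : Fin n → ℝ} {B : Fin L → Matrix (Fin K) (Fin K) ℝ} (hmodel : MLDCSBM Z θ B)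
    {V : Matrix (Fin n) (Fin K) ℝ} (hVorth : Vᵀ * V = 1)
    (hVeig : ∀ k, ∃ μ : ℝ, μ ≠ 0 ∧
      (∑ l, (OmegaL θ Z (B l)) ^ 2).mulVec (colVec V k) = μ • colVec V k) :
    0 < thetaMin θ / (thetaMax θ * √(nMax Z)) ∧
      ∀ i, thetaMin θ / (thetaMax θ * √(nMax Z)) ≤ vecNorm (V i) := by
  obtain ⟨hZ, hθ, -⟩ := hmodel
  obtain ⟨ℓ, hℓ⟩ := hZ.exists_label
  rw [sum_OmegaL_sq_eq_mul] at hVeig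
  obtain ⟨X, rfl⟩ := eq_mul_of_mulVec_colVec_eq_smul hVeig
  have hweight := sum_label_sq_mul_sq_vecNorm_row_eq hℓ hVorth
  have hw_pos : ∀ i, 0 < ∑ j with ℓ j = ℓ i, θ j ^ 2 := fun i =>
    Finset.sum_pos (fun j _ => pow_pos (hθ j).1 2) ⟨i, by simp⟩
  have hw_le : ∀ i, ∑ j with ℓ j = ℓ i, θ j ^ 2 ≤ thetaMax θ ^ 2 * nMax Z := fun i =>
    sum_label_sq_le hℓ (fun j => (hθ j).1.le) (ℓ i)
  obtain ⟨i₀⟩ := ‹Nonempty (Fin n)›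
  have hden : thetaMax θ * √(nMax Z) = √(thetaMax θ ^ 2 * nMax Z) := by
    rw [Real.sqrt_mul (sq_nonneg _), Real.sqrt_sq ((hθ i₀).1.le.trans (le_thetaMax θ i₀))]
  rw [hden]
  refine ⟨div_pos (thetaMin_pos fun i => (hθ i).1)
    (Real.sqrt_pos.2 ((hw_pos i₀).trans_le (hw_le i₀))), fun i => ?_⟩
  calc thetaMin θ / √(thetaMax θ ^ 2 * nMax Z) ≤ θ i / √(∑ j with ℓ j = ℓ i, θ j ^ 2) :=
        div_le_div₀ (hθ i).1.le (thetaMin_le θ i) (Real.sqrt_pos.2 (hw_pos i))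
          (Real.sqrt_le_sqrt (hw_le i))
    _ = vecNorm ((diagonal θ * Z * X) i) := by
        rw [div_eq_iff (Real.sqrt_pos.2 (hw_pos i)).ne', ← Real.sqrt_sq (hθ i).1.le,
          ← hweight i, Real.sqrt_mul (hw_pos i).le, Real.sqrt_sq (vecNorm_nonneg _), mul_comm]

theorem stmt7_general {n L K : ℕ} (hn : 0 < n)
    (Z : Matrix (Fin n) (Fin K) ℝ) (θ : Fin n → ℝ)
    (B : Fin L → Matrix (Fin K) (Fin K) ℝ)
    (hmodel : MLDCSBM Z θ B)
    (c₂ : ℝ)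
    (V : Matrix (Fin n) (Fin K) ℝ)
    (hVorth : Vᵀ * V = 1)
    (hVeig : ∀ k, ∃ μ : ℝ, μ ≠ 0 ∧
      (∑ l, (OmegaL θ Z (B l)) ^ 2).mulVec (colVec V k) = μ • colVec V k)
    (Shat : Matrix (Fin n) (Fin n) ℝ)
    (Vhat : Matrix (Fin n) (Fin K) ℝ)
    (Qs : Matrix (Fin K) (Fin K) ℝ) (hQs : Qsᵀ * Qs = 1)
    (hQsbound : frobNorm (Vhat * Qs - V) ≤
      2 * Real.sqrt (2 * K) * specNorm (Shat - ∑ l, (OmegaL θ Z (B l)) ^ 2) /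
        (c₂ * thetaMin θ ^ 4 * nMin Z ^ 2 * L)) :
    frobNorm (rowNormalize Vhat * Qs - rowNormalize V) ≤
      4 * Real.sqrt (2 * K) * thetaMax θ * Real.sqrt (nMax Z) *
        specNorm (Shat - ∑ l, (OmegaL θ Z (B l)) ^ 2) /
          (c₂ * thetaMin θ ^ 5 * nMin Z ^ 2 * L) := by
  have : Nonempty (Fin n) := ⟨⟨0, hn⟩⟩
  obtain ⟨hm, hrow⟩ := hmodel.pos_le_vecNorm_row hVorth hVeig
  calc frobNorm (rowNormalize Vhat * Qs - rowNormalize V)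
      = frobNorm (rowNormalize (Vhat * Qs) - rowNormalize V) := by
        rw [rowNormalize_mul_of_mul_transpose_eq_one (mul_eq_one_comm.mp hQs)]
    _ ≤ 2 / (thetaMin θ / (thetaMax θ * √(nMax Z))) * frobNorm (Vhat * Qs - V) :=
        frobNorm_rowNormalize_sub_le hm hrow
    _ ≤ _ := by grw [hQsbound]
    _ = _ := by rw [div_div_eq_mul_div]; ring

theorem stmt7 {n L K : ℕ} (hn : 0 < n) (hL : 0 < L) (hK : 0 < K) (hKn : K ≤ n)
    (Z : Matrix (Fin n) (Fin K) ℝ) (θ : Fin n → ℝ)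
    (B : Fin L → Matrix (Fin K) (Fin K) ℝ)
    (hmodel : MLDCSBM Z θ B)
    (c₂ : ℝ) (hc₂ : 0 < c₂)
    (hrank : (∑ l, (B l) ^ 2).rank = K)
    (hgap : c₂ * L ≤ kthAbsEig (∑ l, (B l) ^ 2) K)
    (V : Matrix (Fin n) (Fin K) ℝ)
    (hVorth : Vᵀ * V = 1)
    (hVeig : ∀ k, ∃ μ : ℝ, μ ≠ 0 ∧
      (∑ l, (OmegaL θ Z (B l)) ^ 2).mulVec (colVec V k) = μ • colVec V k)
    (Shat : Matrix (Fin n) (Fin n) ℝ) (hShat : Shat.IsSymm)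
    (Vhat : Matrix (Fin n) (Fin K) ℝ)
    (hVhatOrth : Vhatᵀ * Vhat = 1)
    (hVhatEig : ∀ k, ∃ μ : ℝ,
      Shat.mulVec (colVec Vhat k) = μ • colVec Vhat k ∧ kthAbsEig Shat K ≤ |μ|)
    (hVhatRows : ∀ i, Vhat i ≠ 0)
    (Qs : Matrix (Fin K) (Fin K) ℝ) (hQs : Qsᵀ * Qs = 1)
    (hQsbound : frobNorm (Vhat * Qs - V) ≤
      2 * Real.sqrt (2 * K) * specNorm (Shat - ∑ l, (OmegaL θ Z (B l)) ^ 2) /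
        (c₂ * thetaMin θ ^ 4 * nMin Z ^ 2 * L)) :
    frobNorm (rowNormalize Vhat * Qs - rowNormalize V) ≤
      4 * Real.sqrt (2 * K) * thetaMax θ * Real.sqrt (nMax Z) *
        specNorm (Shat - ∑ l, (OmegaL θ Z (B l)) ^ 2) /
          (c₂ * thetaMin θ ^ 5 * nMin Z ^ 2 * L) :=
  stmt7_general hn Z θ B hmodel c₂ V hVorth hVeig Shat Vhat Qs hQs hQsbound

end
end

section
/- Suppose rank(Σ_{l=1}^L B_l) = K and let U ∈ R^{n×K} have orthonormal columns that are eigenvectors of Ω_sum = Θ Z (Σ_{l=1}^L B_l) Z^T Θ corresponding to its K nonzero eigenvalues. Then every row of U satisfies ‖U(i,:)‖_F ≥ θ_min / (θ_max √(n_max)). -/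
open Matrix MeasureTheory ProbabilityTheory
open scoped BigOperators ENNReal

noncomputable section

theorem stmt14 {n L K : ℕ} (hn : 0 < n) (hL : 0 < L) (hK : 0 < K) (hKn : K ≤ n)
    (Z : Matrix (Fin n) (Fin K) ℝ) (θ : Fin n → ℝ)
    (B : Fin L → Matrix (Fin K) (Fin K) ℝ)
    (hmodel : MLDCSBM Z θ B)
    (hrank : (∑ l, B l).rank = K)
    (U : Matrix (Fin n) (Fin K) ℝ)
    (hUorth : Uᵀ * U = 1)
    (hUeig : ∀ k, ∃ μ : ℝ, μ ≠ 0 ∧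
      (∑ l, OmegaL θ Z (B l)).mulVec (colVec U k) = μ • colVec U k) :
    ∀ i, thetaMin θ / (thetaMax θ * Real.sqrt (nMax Z)) ≤ vecNorm (U i) := by
  classical
  obtain ⟨⟨hZ01, hZrow, hZcol⟩, hθ, hBprop⟩ := hmodel
  have hZ0 : ∀ i c, 0 ≤ Z i c := by
    intro i c; rcases hZ01 i c with h | h <;> simp [h]
  -- community assignment
  have hexists : ∀ i, ∃ c, Z i c = 1 := by
    intro i
    by_contra h
    push_neg at h
    have hz : ∀ c, Z i c = 0 := fun c => (hZ01 i c).resolve_right (h c)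
    have h1 := hZrow i
    simp [hz] at h1
  choose ℓ hℓ1 using hexists
  have hZoff : ∀ i c, c ≠ ℓ i → Z i c = 0 := by
    intro i c hc
    rcases hZ01 i c with h0 | h1
    · exact h0
    · exfalso
      have hle : Z i c + Z i (ℓ i) ≤ ∑ k, Z i k := by
        have : Z i c + Z i (ℓ i) = ∑ k ∈ ({c, ℓ i} : Finset (Fin K)), Z i k := by
          rw [Finset.sum_pair hc]
        rw [this]
        exact Finset.sum_le_sum_of_subset_of_nonneg (Finset.subset_univ _)
          (fun k _ _ => hZ0 i k)
      rw [hZrow i, h1, hℓ1 i] at hle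
      norm_num at hle
  have hpick : ∀ (i : Fin n) (f : Fin K → ℝ), ∑ c, Z i c * f c = f (ℓ i) := by
    intro i f
    rw [Finset.sum_eq_single (ℓ i)]
    · rw [hℓ1 i, one_mul]
    · intro c _ hc; rw [hZoff i c hc, zero_mul]
    · intro h; exact absurd (Finset.mem_univ _) h
  set Bs : Matrix (Fin K) (Fin K) ℝ := ∑ l, B l with hBs
  have hOm : (∑ l, OmegaL θ Z (B l)) =
      Matrix.diagonal θ * Z * Bs * Zᵀ * Matrix.diagonal θ := by
    simp only [OmegaL, hBs]
    rw [Matrix.mul_sum, Matrix.sum_mul, Matrix.sum_mul]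
  have hmv : ∀ (v : Fin n → ℝ) (i : Fin n),
      (∑ l, OmegaL θ Z (B l)).mulVec v i =
        θ i * (Bs.mulVec (Zᵀ.mulVec (fun j => θ j * v j))) (ℓ i) := by
    intro v i
    rw [hOm]
    rw [← Matrix.mulVec_mulVec, ← Matrix.mulVec_mulVec, ← Matrix.mulVec_mulVec,
      ← Matrix.mulVec_mulVec]
    have hdv : (Matrix.diagonal θ).mulVec v = fun j => θ j * v j := by
      funext j; rw [Matrix.mulVec_diagonal]
    rw [hdv, Matrix.mulVec_diagonal]
    congr 1
    simp only [Matrix.mulVec, dotProduct]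
    exact hpick i _
  choose μ hμ0 hμeq using hUeig
  set g : Fin K → Fin K → ℝ :=
    fun c k => Bs.mulVec (Zᵀ.mulVec (fun j => θ j * U j k)) c with hg
  set W : Fin K → Fin K → ℝ := fun c k => (μ k)⁻¹ * g c k with hW
  have hU : ∀ i k, U i k = θ i * W (ℓ i) k := by
    intro i k
    have h1 := congrFun (hμeq k) i
    rw [hmv] at h1
    simp only [Pi.smul_apply, smul_eq_mul, colVec] at h1
    have hμ := hμ0 k
    simp only [hW]
    field_simp
    rw [mul_comm (U i k) (μ k), ← h1, hg]
  set d : Fin K → ℝ := fun c => ∑ i, Z i c * θ i ^ 2 with hd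
  have hd0 : ∀ c, 0 ≤ d c := by
    intro c
    exact Finset.sum_nonneg fun i _ => mul_nonneg (hZ0 i c) (sq_nonneg _)
  have horth : ∀ k k', ∑ c, d c * (W c k * W c k') = if k = k' then 1 else 0 := by
    intro k k'
    have h := congrFun (congrFun hUorth k) k'
    rw [Matrix.mul_apply] at h
    simp only [Matrix.transpose_apply] at h
    rw [Matrix.one_apply] at h
    calc ∑ c, d c * (W c k * W c k')
        = ∑ c, ∑ i, Z i c * (θ i ^ 2 * (W c k * W c k')) := by
          apply Finset.sum_congr rfl; intro c _
          rw [hd, Finset.sum_mul]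
          apply Finset.sum_congr rfl; intro i _; ring
      _ = ∑ i, ∑ c, Z i c * (θ i ^ 2 * (W c k * W c k')) := Finset.sum_comm
      _ = ∑ i, θ i ^ 2 * (W (ℓ i) k * W (ℓ i) k') := by
          apply Finset.sum_congr rfl; intro i _
          exact hpick i _
      _ = ∑ i, U i k * U i k' := by
          apply Finset.sum_congr rfl; intro i _
          rw [hU i k, hU i k']; ring
      _ = if k = k' then 1 else 0 := h
  set V : Matrix (Fin K) (Fin K) ℝ :=
    Matrix.of fun c k => Real.sqrt (d c) * W c k with hV
  have hVtV : Vᵀ * V = 1 := by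
    ext k k'
    rw [Matrix.mul_apply, Matrix.one_apply]
    simp only [hV, Matrix.transpose_apply, Matrix.of_apply]
    calc ∑ c, (Real.sqrt (d c) * W c k) * (Real.sqrt (d c) * W c k')
        = ∑ c, d c * (W c k * W c k') := by
          apply Finset.sum_congr rfl; intro c _
          rw [show (Real.sqrt (d c) * W c k) * (Real.sqrt (d c) * W c k')
              = (Real.sqrt (d c) * Real.sqrt (d c)) * (W c k * W c k') by ring,
            Real.mul_self_sqrt (hd0 c)]
      _ = if k = k' then 1 else 0 := horth k k'
  have hVVt : V * Vᵀ = 1 := mul_eq_one_comm.mp hVtV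
  have hrowW : ∀ c, d c * ∑ k, W c k ^ 2 = 1 := by
    intro c
    have h := congrFun (congrFun hVVt c) c
    rw [Matrix.mul_apply, Matrix.one_apply_eq] at h
    simp only [hV, Matrix.transpose_apply, Matrix.of_apply] at h
    rw [Finset.mul_sum]
    rw [← h]
    apply Finset.sum_congr rfl; intro k _
    rw [show (Real.sqrt (d c) * W c k) * (Real.sqrt (d c) * W c k)
        = (Real.sqrt (d c) * Real.sqrt (d c)) * (W c k)^2 by ring,
      Real.mul_self_sqrt (hd0 c)]
  -- final bounds
  intro i
  have hθi := hθ i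
  have hdpos : 0 < d (ℓ i) := by
    have h1 : Z i (ℓ i) * θ i ^ 2 ≤ d (ℓ i) :=
      Finset.single_le_sum (fun j _ => mul_nonneg (hZ0 j (ℓ i)) (sq_nonneg _))
        (Finset.mem_univ i)
    rw [hℓ1 i, one_mul] at h1
    exact lt_of_lt_of_le (pow_pos hθi.1 2) h1
  have hsumW : ∑ k, W (ℓ i) k ^ 2 = 1 / d (ℓ i) := by
    rw [eq_div_iff hdpos.ne', mul_comm]
    exact hrowW (ℓ i)
  have htmax_ge : ∀ j, θ j ≤ thetaMax θ := fun j =>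
    le_csSup (Set.finite_range θ).bddAbove ⟨j, rfl⟩
  have htmax_pos : 0 < thetaMax θ := lt_of_lt_of_le hθi.1 (htmax_ge i)
  have htmin_le : thetaMin θ ≤ θ i :=
    csInf_le (Set.finite_range θ).bddBelow ⟨i, rfl⟩
  have hnmax : (∑ j, Z j (ℓ i)) ≤ nMax Z :=
    le_csSup (Set.finite_range _).bddAbove ⟨ℓ i, rfl⟩
  have hnorm : vecNorm (U i) = θ i / Real.sqrt (d (ℓ i)) := by
    unfold vecNorm
    have hsum : ∑ k, U i k ^ 2 = θ i ^ 2 * (1 / d (ℓ i)) := by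
      rw [← hsumW, Finset.mul_sum]
      apply Finset.sum_congr rfl; intro k _
      rw [hU i k]; ring
    rw [hsum, Real.sqrt_mul (sq_nonneg _), Real.sqrt_sq hθi.1.le,
      one_div, Real.sqrt_inv]
    ring
  have hd_le : d (ℓ i) ≤ thetaMax θ ^ 2 * nMax Z := by
    calc d (ℓ i) ≤ ∑ j, Z j (ℓ i) * thetaMax θ ^ 2 := by
          apply Finset.sum_le_sum
          intro j _
          exact mul_le_mul_of_nonneg_left
            (pow_le_pow_left₀ (hθ j).1.le (htmax_ge j) 2) (hZ0 j (ℓ i))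
      _ = (∑ j, Z j (ℓ i)) * thetaMax θ ^ 2 := by rw [Finset.sum_mul]
      _ ≤ nMax Z * thetaMax θ ^ 2 :=
          mul_le_mul_of_nonneg_right hnmax (sq_nonneg _)
      _ = thetaMax θ ^ 2 * nMax Z := mul_comm _ _
  have hsq : Real.sqrt (d (ℓ i)) ≤ thetaMax θ * Real.sqrt (nMax Z) := by
    have h := Real.sqrt_le_sqrt hd_le
    rwa [Real.sqrt_mul (sq_nonneg _), Real.sqrt_sq htmax_pos.le] at h
  rw [hnorm]
  exact div_le_div₀ hθi.1.le htmin_le (Real.sqrt_pos.mpr hdpos) hsq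


end
end
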